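/- arXiv:1701.04725 — 2 statements merged into one kernel-verified Lean document; each statement's English description precedes it below -/
import Mathlib

section
/- Let k < 0, let a < b, and let g : [a,b] → ℝ be a C², positive-valued, distance-like function. Suppose that for every t₁, t₂ with a ≤ t₁ < t₂ ≤ b there exist u ∈ ℝ and v > 0 with g_k(t₁; u, v) = g(t₁), g_k(t₂; u, v) = g(t₂), and g(t) ≤ g_k(t; u, v) for all t ∈ [t₁, t₂]. Then g''(t) ≥ √(−k)·(1 − (g'(t))²)·coth(√(−k)·g(t)) holds for all t ∈ [a,b]. -/
open Set

noncomputable def arcosh (x : ℝ) : ℝ := Real.log (x + Real.sqrt (x ^ 2 - 1))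

noncomputable def coth (x : ℝ) : ℝ := Real.cosh x / Real.sinh x

/-- The hyperbolic comparison function. -/
noncomputable def gHyp (k u v t : ℝ) : ℝ :=
  (1 / Real.sqrt (-k)) *
    arcosh (((u ^ 2 + v ^ 2) * Real.exp (-(Real.sqrt (-k)) * t) +
      Real.exp (Real.sqrt (-k) * t)) / (2 * v))

open Topology Real

/-! If the inequality failed at some `t₀`, then by continuity the defect
`s² cosh (s g) (1 - g'²) - s sinh (s g) g''` (with `s = √(-k)`) would be positive on a small interval
`[t₁, t₂]`. Take the comparison function `g_k` touching `g` at `t₁` and `t₂`. Since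
`cosh (s g_k) = c e^{-st} + d e^{st}` solves `y'' = s² y`, the difference
`f = cosh (s g_k) - cosh (s g) ≥ 0` satisfies `f'' = s² f + defect > 0`. So `f` is strictly convex and
vanishes at `t₁` and `t₂`, hence is negative in between: `g > g_k` somewhere, a contradiction. -/

lemma strictConvexOn_of_hasDerivAt2_pos {D : Set ℝ} (hD : Convex ℝ D) {f f' f'' : ℝ → ℝ}
    (hf : ContinuousOn f D) (hf' : ∀ x ∈ interior D, HasDerivAt f (f' x) x)
    (hf'' : ∀ x ∈ interior D, HasDerivAt f' (f'' x) x) (hpos : ∀ x ∈ interior D, 0 < f'' x) :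
    StrictConvexOn ℝ D f := by
  have hmono : StrictMonoOn f' (interior D) :=
    strictMonoOn_of_hasDerivWithinAt_pos hD.interior
      (fun x hx => (hf'' x hx).continuousAt.continuousWithinAt)
      (by simpa only [interior_interior] using fun x hx => (hf'' x hx).hasDerivWithinAt)
      (by rwa [interior_interior])
  exact (hmono.congr fun x hx => (hf' x hx).deriv.symm).strictConvexOn_of_deriv hD hf

lemma exists_Icc_subset_of_mem_nhdsWithin_Icc {a b t₀ : ℝ} {S : Set ℝ} (hab : a < b)
    (ht₀ : t₀ ∈ Icc a b) (hS : S ∈ 𝓝[Icc a b] t₀) :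
    ∃ t₁ t₂, a ≤ t₁ ∧ t₁ < t₂ ∧ t₂ ≤ b ∧ Icc t₁ t₂ ⊆ S := by
  obtain ⟨ε, hε, hball⟩ := Metric.mem_nhdsWithin_iff.1 hS
  refine ⟨max a (t₀ - ε / 2), min b (t₀ + ε / 2), le_max_left _ _, ?_, min_le_left _ _, ?_⟩
  · exact max_lt (lt_min hab (by linarith [ht₀.1])) (lt_min (by linarith [ht₀.2]) (by linarith))
  · rintro x ⟨hx₁, hx₂⟩
    rw [max_le_iff] at hx₁
    rw [le_min_iff] at hx₂
    refine hball ⟨?_, hx₁.1, hx₂.1⟩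
    rw [ball_eq_Ioo]
    constructor <;> linarith

lemma hasDerivAt_derivWithin_Icc {f : ℝ → ℝ} {a b x : ℝ} (hf : DifferentiableOn ℝ f (Icc a b))
    (hx : x ∈ Ioo a b) : HasDerivAt f (derivWithin f (Icc a b) x) x :=
  (hf x (Ioo_subset_Icc_self hx)).hasDerivWithinAt.hasDerivAt (Icc_mem_nhds hx.1 hx.2)

noncomputable def expComb (s c d t : ℝ) : ℝ := c * exp (-s * t) + d * exp (s * t)

lemma hasDerivAt_expComb (s c d x : ℝ) :
    HasDerivAt (expComb s c d) (s * expComb s (-c) d x) x := by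
  have h₁ := (((hasDerivAt_id x).const_mul (-s)).exp).const_mul c
  have h₂ := (((hasDerivAt_id x).const_mul s).exp).const_mul d
  exact (h₁.add h₂).congr_deriv (by simp only [expComb, id]; ring)

lemma cosh_sqrt_mul_gHyp {k v : ℝ} (hk : k < 0) (hv : 0 < v) (u t : ℝ) :
    cosh (√(-k) * gHyp k u v t) = expComb √(-k) ((u ^ 2 + v ^ 2) / (2 * v)) (1 / (2 * v)) t := by
  set s := √(-k)
  have hs : 0 < s := sqrt_pos.2 (by linarith)
  have hexp : exp (-s * t) * exp (s * t) = 1 := by rw [← exp_add]; simp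
  have hsos : (u ^ 2 + v ^ 2) * exp (-s * t) + exp (s * t) - 2 * v
      = u ^ 2 * exp (-s * t) + exp (s * t) * (v * exp (-s * t) - 1) ^ 2 := by
    linear_combination (2 * v - v ^ 2 * exp (-s * t)) * hexp
  have hone : 1 ≤ ((u ^ 2 + v ^ 2) * exp (-s * t) + exp (s * t)) / (2 * v) := by
    rw [one_le_div (by positivity), ← sub_nonneg, hsos]
    positivity
  rw [gHyp, ← mul_assoc, mul_one_div_cancel hs.ne', one_mul]
  rw [show _root_.arcosh = Real.arcosh from rfl, Real.cosh_arcosh hone, expComb]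
  ring

lemma strictConvexOn_expComb_sub_cosh {s c d t₁ t₂ : ℝ} {g g' g'' : ℝ → ℝ}
    (hg : ContinuousOn g (Icc t₁ t₂)) (hg' : ∀ x ∈ Ioo t₁ t₂, HasDerivAt g (g' x) x)
    (hg'' : ∀ x ∈ Ioo t₁ t₂, HasDerivAt g' (g'' x) x)
    (hle : ∀ x ∈ Ioo t₁ t₂, cosh (s * g x) ≤ expComb s c d x)
    (hdefect : ∀ x ∈ Ioo t₁ t₂,
      s * sinh (s * g x) * g'' x < s ^ 2 * cosh (s * g x) * (1 - g' x ^ 2)) :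
    StrictConvexOn ℝ (Icc t₁ t₂) (fun t => expComb s c d t - cosh (s * g t)) := by
  rw [← interior_Icc] at hg' hg'' hle hdefect
  refine strictConvexOn_of_hasDerivAt2_pos (convex_Icc t₁ t₂)
    (f' := fun x => s * expComb s (-c) d x - sinh (s * g x) * (s * g' x))
    (f'' := fun x => s * (s * expComb s c d x)
      - (cosh (s * g x) * (s * g' x) * (s * g' x) + sinh (s * g x) * (s * g'' x)))
    ?_ (fun x hx => ?_) (fun x hx => ?_) (fun x hx => ?_)
  · exact ContinuousOn.sub (fun x _ => (hasDerivAt_expComb s c d x).continuousAt.continuousWithinAt)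
      (by fun_prop)
  · exact (hasDerivAt_expComb s c d x).sub ((hg' x hx).const_mul s).cosh
  · have h := (hasDerivAt_expComb s (-c) d x).const_mul s
    rw [neg_neg] at h
    exact h.sub (((hg' x hx).const_mul s).sinh.mul ((hg'' x hx).const_mul s))
  · -- the second derivative is `s² (expComb - cosh (s g)) + (s² cosh (s g) (1 - g'²) - s sinh (s g) g'')`
    nlinarith [mul_nonneg (sq_nonneg s) (sub_nonneg.2 (hle x hx)), hdefect x hx]

lemma exists_gHyp_lt_of_defect_pos {k u v t₁ t₂ : ℝ} {g g' g'' : ℝ → ℝ} (hk : k < 0) (hv : 0 < v)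
    (h12 : t₁ < t₂) (hg : ContinuousOn g (Icc t₁ t₂)) (hg' : ∀ x ∈ Ioo t₁ t₂, HasDerivAt g (g' x) x)
    (hg'' : ∀ x ∈ Ioo t₁ t₂, HasDerivAt g' (g'' x) x) (hpos : ∀ x ∈ Ioo t₁ t₂, 0 < g x)
    (hdefect : ∀ x ∈ Ioo t₁ t₂,
      √(-k) * sinh (√(-k) * g x) * g'' x < √(-k) ^ 2 * cosh (√(-k) * g x) * (1 - g' x ^ 2))
    (h₁ : gHyp k u v t₁ = g t₁) (h₂ : gHyp k u v t₂ = g t₂) :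
    ∃ x ∈ Ioo t₁ t₂, gHyp k u v x < g x := by
  by_contra! hle
  have hcosh (x : ℝ) (hx : x ∈ Ioo t₁ t₂) :
      cosh (√(-k) * g x) ≤ cosh (√(-k) * gHyp k u v x) :=
    cosh_le_cosh.2 (abs_le_abs_of_nonneg (by have := hpos x hx; positivity)
      (mul_le_mul_of_nonneg_left (hle x hx) (sqrt_nonneg _)))
  have hconv := strictConvexOn_expComb_sub_cosh hg hg' hg''
    (fun x hx => (hcosh x hx).trans_eq (cosh_sqrt_mul_gHyp hk hv u x)) hdefect
  obtain ⟨z, hz⟩ := exists_between h12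
  have := hconv.lt_on_openSegment (left_mem_Icc.2 h12.le) (right_mem_Icc.2 h12.le) h12.ne
    (by rwa [openSegment_eq_Ioo h12])
  simp only [← cosh_sqrt_mul_gHyp hk hv, h₁, h₂, sub_self, max_self] at this
  linarith [hcosh z hz]

lemma eventually_defect_pos_of_lt_mul_coth {s t₀ : ℝ} {D : Set ℝ} {g g' g'' : ℝ → ℝ} (hs : 0 < s)
    (hg : ContinuousOn g D) (hg' : ContinuousOn g' D) (hg'' : ContinuousOn g'' D) (ht₀ : t₀ ∈ D)
    (hpos : 0 < g t₀) (hlt : g'' t₀ < s * (1 - g' t₀ ^ 2) * coth (s * g t₀)) :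
    ∀ᶠ t in 𝓝[D] t₀, s * sinh (s * g t) * g'' t < s ^ 2 * cosh (s * g t) * (1 - g' t ^ 2) := by
  have hsinh : 0 < sinh (s * g t₀) := sinh_pos_iff.2 (mul_pos hs hpos)
  have hdefect : s * sinh (s * g t₀) * g'' t₀ < s ^ 2 * cosh (s * g t₀) * (1 - g' t₀ ^ 2) :=
    calc s * sinh (s * g t₀) * g'' t₀
        < s * sinh (s * g t₀) * (s * (1 - g' t₀ ^ 2) * coth (s * g t₀)) := by gcongr
      _ = s ^ 2 * cosh (s * g t₀) * (1 - g' t₀ ^ 2) := by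
          rw [coth]; field_simp [hsinh.ne']
  have hcont : ContinuousOn (fun t => s ^ 2 * cosh (s * g t) * (1 - g' t ^ 2)
      - s * sinh (s * g t) * g'' t) D := by fun_prop
  exact ((hcont t₀ ht₀).eventually (lt_mem_nhds (sub_pos.2 hdefect))).mono fun _ => sub_pos.1

theorem diff_ineq_of_hyp_comparison_general (k : ℝ) (hk : k < 0) (a b : ℝ) (hab : a < b) (g : ℝ → ℝ)
    (hC2 : ContDiffOn ℝ 2 g (Icc a b))
    (hpos : ∀ t ∈ Icc a b, 0 < g t)
    (hcmp : ∀ t₁ t₂, a ≤ t₁ → t₁ < t₂ → t₂ ≤ b → ∃ u v : ℝ, 0 < v ∧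
      gHyp k u v t₁ = g t₁ ∧ gHyp k u v t₂ = g t₂ ∧
      ∀ t ∈ Icc t₁ t₂, g t ≤ gHyp k u v t) :
    ∀ t ∈ Icc a b, (derivWithin (derivWithin g (Icc a b)) (Icc a b)) t ≥ Real.sqrt (-k) * (1 - ((derivWithin g (Icc a b)) t) ^ 2) * coth (Real.sqrt (-k) * g t) := by
  intro t₀ ht₀
  by_contra! hfail
  have hC1 : ContDiffOn ℝ 1 (derivWithin g (Icc a b)) (Icc a b) :=
    hC2.derivWithin (uniqueDiffOn_Icc hab) le_rfl
  have hnear := eventually_defect_pos_of_lt_mul_coth (sqrt_pos.2 (neg_pos.2 hk))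
    hC2.continuousOn hC1.continuousOn
    (hC1.continuousOn_derivWithin (uniqueDiffOn_Icc hab) le_rfl) ht₀ (hpos t₀ ht₀) hfail
  obtain ⟨t₁, t₂, ha, h12, hb, hsub⟩ := exists_Icc_subset_of_mem_nhdsWithin_Icc hab ht₀ hnear
  have hI : Icc t₁ t₂ ⊆ Icc a b := Icc_subset_Icc ha hb
  have hIoo : Ioo t₁ t₂ ⊆ Ioo a b := Ioo_subset_Ioo ha hb
  obtain ⟨u, v, hv, h₁, h₂, hle⟩ := hcmp t₁ t₂ ha h12 hb
  obtain ⟨x, hx, hlt⟩ := exists_gHyp_lt_of_defect_pos hk hv h12 (hC2.continuousOn.mono hI)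
    (fun x hx => hasDerivAt_derivWithin_Icc (hC2.differentiableOn two_ne_zero) (hIoo hx))
    (fun x hx => hasDerivAt_derivWithin_Icc (hC1.differentiableOn one_ne_zero) (hIoo hx))
    (fun x hx => hpos x (hI (Ioo_subset_Icc_self hx))) (fun x hx => hsub (Ioo_subset_Icc_self hx))
    h₁ h₂
  exact (hle x (Ioo_subset_Icc_self hx)).not_gt hlt

theorem diff_ineq_of_hyp_comparison (k : ℝ) (hk : k < 0) (a b : ℝ) (hab : a < b) (g : ℝ → ℝ)
    (hC2 : ContDiffOn ℝ 2 g (Icc a b))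
    (hpos : ∀ t ∈ Icc a b, 0 < g t)
    (hnonexp : ∀ t₁ ∈ Icc a b, ∀ t₂ ∈ Icc a b, |g t₁ - g t₂| ≤ |t₁ - t₂|)
    (hdistlike : ∀ t₁ ∈ Icc a b, ∀ t₂ ∈ Icc a b, |t₁ - t₂| ≤ g t₁ + g t₂)
    (hcmp : ∀ t₁ t₂, a ≤ t₁ → t₁ < t₂ → t₂ ≤ b → ∃ u v : ℝ, 0 < v ∧
      gHyp k u v t₁ = g t₁ ∧ gHyp k u v t₂ = g t₂ ∧
      ∀ t ∈ Icc t₁ t₂, g t ≤ gHyp k u v t) :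
    ∀ t ∈ Icc a b, (derivWithin (derivWithin g (Icc a b)) (Icc a b)) t ≥ Real.sqrt (-k) * (1 - ((derivWithin g (Icc a b)) t) ^ 2) * coth (Real.sqrt (-k) * g t) :=
  diff_ineq_of_hyp_comparison_general k hk a b hab g hC2 hpos hcmp
end

section
/- Let k < 0, u ∈ ℝ, v > 0, and define g_k : ℝ → ℝ by g_k(t) = (1/√(−k)) · arcosh( ((u² + v²) e^{−√(−k) t} + e^{√(−k) t}) / (2v) ). Then at every t at which ((u² + v²) e^{−√(−k) t} + e^{√(−k) t}) / (2v) > 1, the identity e^{−√(−k) t} ( cosh(√(−k) g_k(t)) + g_k'(t) sinh(√(−k) g_k(t)) ) = 1/v holds. -/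
theorem arcosh_eq_real_arcosh : arcosh = Real.arcosh := rfl

theorem cosh_add_deriv_mul_sinh_of_arcosh_comp {A : ℝ → ℝ} {A' s t : ℝ} (hs : s ≠ 0)
    (hA : HasDerivAt A A' t) (hAt : 1 < A t) :
    Real.cosh (s * (1 / s * arcosh (A t))) +
        deriv (fun τ => 1 / s * arcosh (A τ)) t * Real.sinh (s * (1 / s * arcosh (A t))) =
      A t + A' / s := by
  rw [arcosh_eq_real_arcosh]
  have hderiv : HasDerivAt (fun τ => 1 / s * Real.arcosh (A τ))
      (1 / s * ((√(A t ^ 2 - 1))⁻¹ * A')) t :=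
    ((Real.hasDerivAt_arcosh hAt).comp t hA).const_mul (1 / s)
  have hsqrt : 0 < √(A t ^ 2 - 1) := Real.sqrt_pos.mpr (by nlinarith)
  rw [hderiv.deriv, one_div, mul_inv_cancel_left₀ hs, Real.cosh_arcosh hAt.le,
    Real.sinh_arcosh hAt.le]
  field_simp

theorem hasDerivAt_mul_exp_neg_add_exp_div (a b s t : ℝ) :
    HasDerivAt (fun τ => (a * Real.exp (-s * τ) + Real.exp (s * τ)) / b)
      (s * (Real.exp (s * t) - a * Real.exp (-s * t)) / b) t := by
  have hneg := ((hasDerivAt_id' t).const_mul (-s)).exp.const_mul a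
  have hpos := ((hasDerivAt_id' t).const_mul s).exp
  exact ((hneg.add hpos).div_const b).congr_deriv (by ring)

/-- At every point where the argument of `arcosh` exceeds `1`, the hyperbolic comparison
function satisfies `e^{-√(-k) t} (cosh(√(-k) g_k t) + g_k' t · sinh(√(-k) g_k t)) = 1 / v`. -/
theorem gHyp_first_integral (k u v : ℝ) (hk : k < 0) (hv : 0 < v) (t : ℝ)
    (hgt : 1 < ((u ^ 2 + v ^ 2) * Real.exp (-(Real.sqrt (-k)) * t) +
      Real.exp (Real.sqrt (-k) * t)) / (2 * v)) :
    Real.exp (-(Real.sqrt (-k)) * t) *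
      (Real.cosh (Real.sqrt (-k) * gHyp k u v t) +
        deriv (gHyp k u v) t * Real.sinh (Real.sqrt (-k) * gHyp k u v t)) = 1 / v := by
  have hs : Real.sqrt (-k) ≠ 0 := (Real.sqrt_pos.mpr (neg_pos.mpr hk)).ne'
  unfold gHyp
  rw [cosh_add_deriv_mul_sinh_of_arcosh_comp hs
    (hasDerivAt_mul_exp_neg_add_exp_div _ _ _ t) hgt, neg_mul, Real.exp_neg]
  field_simp
  ring
end
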